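/- Let u : ℝ² → ℝ, let φ, ψ, Δ be as in the binary Bäcklund transformation (φ a smooth solution of the heat equation with potential u, ψ a smooth solution of the dual heat equation with potential u, Δ smooth and nowhere vanishing with ∂_{x₁}Δ = φψ and ∂_{x₂}Δ = −(φ∂_{x₁}ψ − ψ∂_{x₁}φ)). Let g : ℝ² → ℂ be a smooth solution of the dual heat conduction equation with potential u, let D ∈ ℂ, and let βᵈ : ℝ² → ℂ be smooth with ∂_{x₁}βᵈ = g·φ and ∂_{x₂}βᵈ = −(φ·∂_{x₁}g − g·∂_{x₁}φ). Then the dual Darboux transform ψ₁ := g − (ψ/Δ)·(D + βᵈ) solves the dual heat conduction equation with potential u₁ = u − 2∂_{x₁}²(log |Δ|). -/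

import Mathlib

open MeasureTheory Filter Set

/-- Partial derivative with respect to the first coordinate on `ℝ²`. -/
noncomputable def D1 {E : Type*} [NormedAddCommGroup E] [NormedSpace ℝ E]
    (f : ℝ × ℝ → E) (x : ℝ × ℝ) : E :=
  deriv (fun t => f (t, x.2)) x.1

/-- Partial derivative with respect to the second coordinate on `ℝ²`. -/
noncomputable def D2 {E : Type*} [NormedAddCommGroup E] [NormedSpace ℝ E]
    (f : ℝ × ℝ → E) (x : ℝ × ℝ) : E :=
  deriv (fun t => f (x.1, t)) x.2

section Helpers

variable {E : Type*} [NormedAddCommGroup E] [NormedSpace ℝ E]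

theorem hasDerivAt_slice1 {f : ℝ × ℝ → E} {x : ℝ × ℝ} (hf : DifferentiableAt ℝ f x) :
    HasDerivAt (fun t => f (t, x.2)) (fderiv ℝ f x (1, 0)) x.1 := by
  have h1 : HasDerivAt (fun t : ℝ => ((t, x.2) : ℝ × ℝ)) ((1 : ℝ), (0 : ℝ)) x.1 :=
    HasDerivAt.prodMk (hasDerivAt_id x.1) (hasDerivAt_const _ _)
  exact (hf.hasFDerivAt.comp_hasDerivAt x.1 h1)

theorem hasDerivAt_slice2 {f : ℝ × ℝ → E} {x : ℝ × ℝ} (hf : DifferentiableAt ℝ f x) :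
    HasDerivAt (fun t => f (x.1, t)) (fderiv ℝ f x (0, 1)) x.2 := by
  have h1 : HasDerivAt (fun t : ℝ => ((x.1, t) : ℝ × ℝ)) ((0 : ℝ), (1 : ℝ)) x.2 :=
    HasDerivAt.prodMk (hasDerivAt_const _ _) (hasDerivAt_id x.2)
  exact (hf.hasFDerivAt.comp_hasDerivAt x.2 h1)

theorem hasDerivAt_D1 {f : ℝ × ℝ → E} (hf : ContDiff ℝ (⊤ : ℕ∞) f) (x : ℝ × ℝ) :
    HasDerivAt (fun t => f (t, x.2)) (D1 f x) x.1 :=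
  (hasDerivAt_slice1 (hf.differentiable (by simp) x)).differentiableAt.hasDerivAt

theorem hasDerivAt_D2 {f : ℝ × ℝ → E} (hf : ContDiff ℝ (⊤ : ℕ∞) f) (x : ℝ × ℝ) :
    HasDerivAt (fun t => f (x.1, t)) (D2 f x) x.2 :=
  (hasDerivAt_slice2 (hf.differentiable (by simp) x)).differentiableAt.hasDerivAt

theorem contDiff_D1 {f : ℝ × ℝ → E} (hf : ContDiff ℝ (⊤ : ℕ∞) f) : ContDiff ℝ (⊤ : ℕ∞) (D1 f) := by
  have h : D1 f = fun x => fderiv ℝ f x (1, 0) := by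
    funext x
    exact (hasDerivAt_slice1 (hf.differentiable (by simp) x)).deriv
  rw [h]
  exact (hf.fderiv_right (by simp)).clm_apply contDiff_const

end Helpers

section FieldHelpers

variable {F : Type*} [NontriviallyNormedField F] [NormedAlgebra ℝ F]

theorem D1_mul {f g : ℝ × ℝ → F} (hf : ContDiff ℝ (⊤ : ℕ∞) f) (hg : ContDiff ℝ (⊤ : ℕ∞) g) (x : ℝ × ℝ) :
    D1 (fun y => f y * g y) x = D1 f x * g x + f x * D1 g x :=
  ((hasDerivAt_D1 hf x).mul (hasDerivAt_D1 hg x)).deriv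

theorem D2_mul {f g : ℝ × ℝ → F} (hf : ContDiff ℝ (⊤ : ℕ∞) f) (hg : ContDiff ℝ (⊤ : ℕ∞) g) (x : ℝ × ℝ) :
    D2 (fun y => f y * g y) x = D2 f x * g x + f x * D2 g x :=
  ((hasDerivAt_D2 hf x).mul (hasDerivAt_D2 hg x)).deriv

theorem D1_sub {f g : ℝ × ℝ → F} (hf : ContDiff ℝ (⊤ : ℕ∞) f) (hg : ContDiff ℝ (⊤ : ℕ∞) g) (x : ℝ × ℝ) :
    D1 (fun y => f y - g y) x = D1 f x - D1 g x :=
  ((hasDerivAt_D1 hf x).sub (hasDerivAt_D1 hg x)).deriv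

theorem D2_sub {f g : ℝ × ℝ → F} (hf : ContDiff ℝ (⊤ : ℕ∞) f) (hg : ContDiff ℝ (⊤ : ℕ∞) g) (x : ℝ × ℝ) :
    D2 (fun y => f y - g y) x = D2 f x - D2 g x :=
  ((hasDerivAt_D2 hf x).sub (hasDerivAt_D2 hg x)).deriv

theorem D1_add {f g : ℝ × ℝ → F} (hf : ContDiff ℝ (⊤ : ℕ∞) f) (hg : ContDiff ℝ (⊤ : ℕ∞) g) (x : ℝ × ℝ) :
    D1 (fun y => f y + g y) x = D1 f x + D1 g x :=
  ((hasDerivAt_D1 hf x).add (hasDerivAt_D1 hg x)).deriv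

theorem D1_const_add {f : ℝ × ℝ → F} (c : F) (hf : ContDiff ℝ (⊤ : ℕ∞) f) (x : ℝ × ℝ) :
    D1 (fun y => c + f y) x = D1 f x :=
  ((hasDerivAt_D1 hf x).const_add c).deriv

theorem D2_const_add {f : ℝ × ℝ → F} (c : F) (hf : ContDiff ℝ (⊤ : ℕ∞) f) (x : ℝ × ℝ) :
    D2 (fun y => c + f y) x = D2 f x :=
  ((hasDerivAt_D2 hf x).const_add c).deriv

theorem D1_div {f g : ℝ × ℝ → F} (hf : ContDiff ℝ (⊤ : ℕ∞) f) (hg : ContDiff ℝ (⊤ : ℕ∞) g) (x : ℝ × ℝ)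
    (h0 : g x ≠ 0) :
    D1 (fun y => f y / g y) x = (D1 f x * g x - f x * D1 g x) / (g x ^ 2) :=
  ((hasDerivAt_D1 hf x).div (hasDerivAt_D1 hg x) h0).deriv

theorem D2_div {f g : ℝ × ℝ → F} (hf : ContDiff ℝ (⊤ : ℕ∞) f) (hg : ContDiff ℝ (⊤ : ℕ∞) g) (x : ℝ × ℝ)
    (h0 : g x ≠ 0) :
    D2 (fun y => f y / g y) x = (D2 f x * g x - f x * D2 g x) / (g x ^ 2) :=
  ((hasDerivAt_D2 hf x).div (hasDerivAt_D2 hg x) h0).deriv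

end FieldHelpers

theorem D1_ofReal {f : ℝ × ℝ → ℝ} (hf : ContDiff ℝ (⊤ : ℕ∞) f) (x : ℝ × ℝ) :
    D1 (fun y => (f y : ℂ)) x = ((D1 f x : ℝ) : ℂ) := by
  unfold D1
  exact ((hasDerivAt_D1 hf x).ofReal_comp).deriv

theorem D2_ofReal {f : ℝ × ℝ → ℝ} (hf : ContDiff ℝ (⊤ : ℕ∞) f) (x : ℝ × ℝ) :
    D2 (fun y => (f y : ℂ)) x = ((D2 f x : ℝ) : ℂ) := by
  unfold D2
  exact ((hasDerivAt_D2 hf x).ofReal_comp).deriv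

theorem D1_log {f : ℝ × ℝ → ℝ} (hf : ContDiff ℝ (⊤ : ℕ∞) f) (x : ℝ × ℝ) (h0 : f x ≠ 0) :
    D1 (fun y => Real.log (f y)) x = D1 f x / f x :=
  ((hasDerivAt_D1 hf x).log h0).deriv

theorem contDiff_div' {f g : ℝ × ℝ → ℂ} (hf : ContDiff ℝ (⊤ : ℕ∞) f) (hg : ContDiff ℝ (⊤ : ℕ∞) g)
    (h0 : ∀ x, g x ≠ 0) : ContDiff ℝ (⊤ : ℕ∞) (fun y => f y / g y) := by
  simp only [div_eq_mul_inv]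
  exact hf.mul (hg.inv h0)

set_option maxHeartbeats 1000000 in
/-- With `φ, ψ, Δ` as in the binary Bäcklund transformation, if `g` is a
smooth solution of the dual heat equation with potential `u`, `D ∈ ℂ`, and `βᵈ` satisfies
`∂₁βᵈ = g·φ`, `∂₂βᵈ = -(φ·∂₁g - g·∂₁φ)`, then the dual Darboux transform
`ψ₁ = g - (ψ/Δ)(D + βᵈ)` solves the dual heat equation with potential
`u₁ = u - 2∂₁² log |Δ|`. -/
theorem binary_dual_darboux_transform (u : ℝ × ℝ → ℝ) (φ ψ Δ : ℝ × ℝ → ℝ)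
    (g βd : ℝ × ℝ → ℂ) (D : ℂ)
    (hφ : ContDiff ℝ (⊤ : ℕ∞) φ)
    (hφeq : ∀ x : ℝ × ℝ, -D2 φ x + D1 (D1 φ) x - u x * φ x = 0)
    (hψ : ContDiff ℝ (⊤ : ℕ∞) ψ)
    (hψeq : ∀ x : ℝ × ℝ, D2 ψ x + D1 (D1 ψ) x - u x * ψ x = 0)
    (hΔ : ContDiff ℝ (⊤ : ℕ∞) Δ) (hΔ0 : ∀ x, Δ x ≠ 0)
    (hΔ1 : ∀ x : ℝ × ℝ, D1 Δ x = φ x * ψ x)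
    (hΔ2 : ∀ x : ℝ × ℝ, D2 Δ x = -(φ x * D1 ψ x - ψ x * D1 φ x))
    (hg : ContDiff ℝ (⊤ : ℕ∞) g)
    (hgeq : ∀ x : ℝ × ℝ, D2 g x + D1 (D1 g) x - (u x : ℂ) * g x = 0)
    (hβd : ContDiff ℝ (⊤ : ℕ∞) βd)
    (hβd1 : ∀ x : ℝ × ℝ, D1 βd x = g x * (φ x : ℂ))
    (hβd2 : ∀ x : ℝ × ℝ, D2 βd x = -((φ x : ℂ) * D1 g x - g x * ((D1 φ x : ℝ) : ℂ)))
    (u₁ : ℝ × ℝ → ℝ)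
    (hu₁ : ∀ x : ℝ × ℝ, u₁ x = u x - 2 * D1 (D1 (fun y => Real.log |Δ y|)) x)
    (ψ₁ : ℝ × ℝ → ℂ)
    (hψ₁ : ∀ x : ℝ × ℝ, ψ₁ x = g x - ((ψ x / Δ x : ℝ) : ℂ) * (D + βd x)) :
    ∀ x : ℝ × ℝ, D2 ψ₁ x + D1 (D1 ψ₁) x - (u₁ x : ℂ) * ψ₁ x = 0 := by
  have hOf : ContDiff ℝ (⊤ : ℕ∞) Complex.ofReal := Complex.ofRealCLM.contDiff
  have hΔc : ∀ y : ℝ × ℝ, ((Δ y : ℝ) : ℂ) ≠ 0 := fun y => Complex.ofReal_ne_zero.mpr (hΔ0 y)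
  -- smoothness facts
  have sφc : ContDiff ℝ (⊤ : ℕ∞) (fun y => ((φ y : ℝ) : ℂ)) := hOf.comp hφ
  have sψc : ContDiff ℝ (⊤ : ℕ∞) (fun y => ((ψ y : ℝ) : ℂ)) := hOf.comp hψ
  have sΔc : ContDiff ℝ (⊤ : ℕ∞) (fun y => ((Δ y : ℝ) : ℂ)) := hOf.comp hΔ
  have sB : ContDiff ℝ (⊤ : ℕ∞) (fun y => D + βd y) := contDiff_const.add hβd
  have sw : ContDiff ℝ (⊤ : ℕ∞) (fun y => ((ψ y : ℝ) : ℂ) / ((Δ y : ℝ) : ℂ)) := contDiff_div' sψc sΔc hΔc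
  have sWB : ContDiff ℝ (⊤ : ℕ∞) (fun y => ((ψ y : ℝ) : ℂ) / ((Δ y : ℝ) : ℂ) * (D + βd y)) :=
    sw.mul sB
  have sgφc : ContDiff ℝ (⊤ : ℕ∞) (fun y => g y * ((φ y : ℝ) : ℂ)) := hg.mul sφc
  have sD1ψc : ContDiff ℝ (⊤ : ℕ∞) (fun y => ((D1 ψ y : ℝ) : ℂ)) := hOf.comp (contDiff_D1 hψ)
  have sφψc : ContDiff ℝ (⊤ : ℕ∞) (fun y => ((φ y : ℝ) : ℂ) * ((ψ y : ℝ) : ℂ)) := sφc.mul sψc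
  have sD1ψΔ : ContDiff ℝ (⊤ : ℕ∞) (fun y => ((D1 ψ y : ℝ) : ℂ) * ((Δ y : ℝ) : ℂ)) := sD1ψc.mul sΔc
  have sψφψ : ContDiff ℝ (⊤ : ℕ∞) (fun y => ((ψ y : ℝ) : ℂ) * (((φ y : ℝ) : ℂ) * ((ψ y : ℝ) : ℂ))) :=
    sψc.mul sφψc
  have sN : ContDiff ℝ (⊤ : ℕ∞) (fun y => ((D1 ψ y : ℝ) : ℂ) * ((Δ y : ℝ) : ℂ) -
      ((ψ y : ℝ) : ℂ) * (((φ y : ℝ) : ℂ) * ((ψ y : ℝ) : ℂ))) := sD1ψΔ.sub sψφψ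
  have sdd : ContDiff ℝ (⊤ : ℕ∞) (fun y => ((Δ y : ℝ) : ℂ) * ((Δ y : ℝ) : ℂ)) := sΔc.mul sΔc
  have hdd : ∀ y : ℝ × ℝ, ((Δ y : ℝ) : ℂ) * ((Δ y : ℝ) : ℂ) ≠ 0 :=
    fun y => mul_ne_zero (hΔc y) (hΔc y)
  have sW1 : ContDiff ℝ (⊤ : ℕ∞) (fun y => (((D1 ψ y : ℝ) : ℂ) * ((Δ y : ℝ) : ℂ) -
      ((ψ y : ℝ) : ℂ) * (((φ y : ℝ) : ℂ) * ((ψ y : ℝ) : ℂ))) /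
      (((Δ y : ℝ) : ℂ) * ((Δ y : ℝ) : ℂ))) := contDiff_div' sN sdd hdd
  have sW1B : ContDiff ℝ (⊤ : ℕ∞) (fun y => (((D1 ψ y : ℝ) : ℂ) * ((Δ y : ℝ) : ℂ) -
      ((ψ y : ℝ) : ℂ) * (((φ y : ℝ) : ℂ) * ((ψ y : ℝ) : ℂ))) /
      (((Δ y : ℝ) : ℂ) * ((Δ y : ℝ) : ℂ)) * (D + βd y)) := sW1.mul sB
  have swgφ : ContDiff ℝ (⊤ : ℕ∞) (fun y => ((ψ y : ℝ) : ℂ) / ((Δ y : ℝ) : ℂ) *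
      (g y * ((φ y : ℝ) : ℂ))) := sw.mul sgφc
  have sSum : ContDiff ℝ (⊤ : ℕ∞) (fun y => (((D1 ψ y : ℝ) : ℂ) * ((Δ y : ℝ) : ℂ) -
      ((ψ y : ℝ) : ℂ) * (((φ y : ℝ) : ℂ) * ((ψ y : ℝ) : ℂ))) /
      (((Δ y : ℝ) : ℂ) * ((Δ y : ℝ) : ℂ)) * (D + βd y) +
      ((ψ y : ℝ) : ℂ) / ((Δ y : ℝ) : ℂ) * (g y * ((φ y : ℝ) : ℂ))) := sW1B.add swgφ
  have slφψ : ContDiff ℝ (⊤ : ℕ∞) (fun y => φ y * ψ y) := hφ.mul hψ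
  -- the function ψ₁
  have Eψ₁ : ψ₁ = fun y => g y - ((ψ y : ℝ) : ℂ) / ((Δ y : ℝ) : ℂ) * (D + βd y) := by
    funext y
    rw [hψ₁ y]
    push_cast
    ring
  -- first derivative of ψ₁ as a function
  have ED1lam : D1 (fun y => g y - ((ψ y : ℝ) : ℂ) / ((Δ y : ℝ) : ℂ) * (D + βd y)) =
      fun y => D1 g y - ((((D1 ψ y : ℝ) : ℂ) * ((Δ y : ℝ) : ℂ) -
        ((ψ y : ℝ) : ℂ) * (((φ y : ℝ) : ℂ) * ((ψ y : ℝ) : ℂ))) /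
        (((Δ y : ℝ) : ℂ) * ((Δ y : ℝ) : ℂ)) * (D + βd y) +
        ((ψ y : ℝ) : ℂ) / ((Δ y : ℝ) : ℂ) * (g y * ((φ y : ℝ) : ℂ))) := by
    funext y
    rw [D1_sub hg sWB y, D1_mul sw sB y, D1_const_add D hβd y, hβd1 y,
      D1_div sψc sΔc y (hΔc y), D1_ofReal hψ y, D1_ofReal hΔ y, hΔ1 y]
    push_cast
    ring
  -- the log-derivative function
  have EL : (fun y => Real.log |Δ y|) = fun y => Real.log (Δ y) := by
    funext y; rw [Real.log_abs]
  have hlog1 : D1 (fun y => Real.log (Δ y)) = fun y => φ y * ψ y / Δ y := by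
    funext y; rw [D1_log hΔ y (hΔ0 y), hΔ1 y]
  intro x
  have hG2 : D2 g x = (u x : ℂ) * g x - D1 (D1 g) x := by linear_combination hgeq x
  have hP2 : D2 ψ x = u x * ψ x - D1 (D1 ψ) x := by linarith [hψeq x]
  simp only [Eψ₁, hu₁]
  rw [EL, hlog1, D1_div slφψ hΔ x (hΔ0 x), D1_mul hφ hψ x,
    D2_sub hg sWB x, D2_mul sw sB x, D2_div sψc sΔc x (hΔc x),
    D2_ofReal hψ x, D2_ofReal hΔ x, D2_const_add D hβd x, hβd2 x,
    ED1lam,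
    D1_sub (contDiff_D1 hg) sSum x,
    D1_add sW1B swgφ x,
    D1_mul sW1 sB x, D1_mul sw sgφc x,
    D1_div sN sdd x (hdd x),
    D1_sub sD1ψΔ sψφψ x,
    D1_mul sD1ψc sΔc x, D1_mul sψc sφψc x, D1_mul sφc sψc x,
    D1_mul sΔc sΔc x,
    D1_mul hg sφc x, D1_const_add D hβd x, hβd1 x,
    D1_div sψc sΔc x (hΔc x),
    D1_ofReal (contDiff_D1 hψ) x,
    D1_ofReal hψ x, D1_ofReal hφ x, D1_ofReal hΔ x, hΔ1 x, hΔ2 x, hP2, hG2]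
  push_cast
  field_simp [hΔc x, hdd x, mul_ne_zero (hdd x) (hdd x)]
  ring
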